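/- Let q be a real number with q > 1. For integers 0 ≤ b < a define C(a,b) = −[a choose b]_q · ∏_{k=b+1}^{a} (q^k + 1). Then for all integers 0 ≤ i ≤ m, the sum, over all integers j ≥ 1 and all strictly increasing integer sequences i = ℓ_1 < ℓ_2 < … < ℓ_j = m, of ∏_{k=1}^{j−1} C(ℓ_{k+1}, ℓ_k) equals (−1)^{m−i} · q^{(m−i)(m−i−1)/2} · [m choose i]_q · ∏_{k=i+1}^{m} (q^k + 1). (When i = m the only such sequence is the one-term sequence, whose associated empty product is 1.) -/

import Mathlib

/-!
Splitting off the first step `i < t` of a chain shows that the chain sums `F(i, m)` satisfy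
`F(i, m) = ∑_{i < t ≤ m} C(t, i) F(t, m)` with `F(m, m) = 1`, which determines them. The closed
form satisfies the same recursion: after `[m choose t]_q [t choose i]_q =
[m choose i]_q [m - i choose m - t]_q`, the recursion reduces to
`∑_{s=0}^{n} (-1)^s q^{s(s-1)/2} [n choose s]_q = 0` for `n = m - i ≥ 1`, which is the
`q`-binomial theorem at `x = -1`.
-/

/-- The Gaussian binomial coefficient `[n choose k]_q` for a real base `q`. -/
noncomputable def gbinom (q : ℝ) (n k : ℕ) : ℝ :=
  ∏ j ∈ Finset.Icc 1 k, (q ^ (n - k + j) - 1) / (q ^ j - 1)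

/-- The coefficient `C(a, b) = −[a choose b]_q · ∏_{k=b+1}^{a} (q^k + 1)`. -/
noncomputable def coeffC (q : ℝ) (a b : ℕ) : ℝ :=
  -(gbinom q a b * ∏ k ∈ Finset.Icc (b + 1) a, (q ^ k + 1))

/-- For a strictly increasing list `ℓ_1 < ℓ_2 < ⋯ < ℓ_j`, the product
`∏_{k=1}^{j-1} C(ℓ_{k+1}, ℓ_k)`; for lists of length at most one this is the empty product 1. -/
noncomputable def chainProd (q : ℝ) : List ℕ → ℝ
  | [] => 1
  | [_] => 1
  | a :: b :: t => coeffC q b a * chainProd q (b :: t)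

open Finset

/-- `(q - 1)ⁿ [n]_q!`; the normalising power of `q - 1` cancels in every binomial quotient. -/
noncomputable def qFactorial (q : ℝ) (n : ℕ) : ℝ :=
  ∏ j ∈ Icc 1 n, (q ^ j - 1)

section QBinomial

variable {q : ℝ}

lemma pow_sub_one_ne_zero_of_one_lt (hq : 1 < q) {j : ℕ} (hj : j ≠ 0) : q ^ j - 1 ≠ 0 :=
  sub_ne_zero.2 (one_lt_pow₀ hq hj).ne'

lemma qFactorial_ne_zero (hq : 1 < q) (n : ℕ) : qFactorial q n ≠ 0 :=
  prod_ne_zero_iff.2 fun j hj => pow_sub_one_ne_zero_of_one_lt hq (by grind)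

lemma qFactorial_zero (q : ℝ) : qFactorial q 0 = 1 := by
  simp [qFactorial]

lemma qFactorial_succ (q : ℝ) (n : ℕ) :
    qFactorial q (n + 1) = qFactorial q n * (q ^ (n + 1) - 1) :=
  prod_Icc_succ_top (by omega) _

lemma qFactorial_add (q : ℝ) (a k : ℕ) :
    qFactorial q (a + k) = qFactorial q a * ∏ j ∈ Icc 1 k, (q ^ (a + j) - 1) := by
  induction k with
  | zero => simp
  | succ k ih =>
    rw [← add_assoc, qFactorial_succ, ih, prod_Icc_succ_top (by omega), mul_assoc, add_assoc]

lemma gbinom_eq_qFactorial (hq : 1 < q) {n k : ℕ} (h : k ≤ n) :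
    gbinom q n k = qFactorial q n / (qFactorial q k * qFactorial q (n - k)) := by
  have hn : qFactorial q n = qFactorial q (n - k) * ∏ j ∈ Icc 1 k, (q ^ (n - k + j) - 1) := by
    rw [← qFactorial_add, Nat.sub_add_cancel h]
  rw [gbinom, prod_div_distrib, hn, show ∏ j ∈ Icc 1 k, (q ^ j - 1) = qFactorial q k from rfl]
  field_simp [qFactorial_ne_zero hq]

lemma gbinom_zero (q : ℝ) (n : ℕ) : gbinom q n 0 = 1 := by
  simp [gbinom]

lemma gbinom_self (hq : 1 < q) (n : ℕ) : gbinom q n n = 1 := by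
  rw [gbinom_eq_qFactorial hq le_rfl, Nat.sub_self, qFactorial_zero, mul_one,
    div_self (qFactorial_ne_zero hq n)]

lemma gbinom_succ_succ (hq : 1 < q) {n s : ℕ} (h : s < n) :
    gbinom q (n + 1) (s + 1) = gbinom q n s + q ^ (s + 1) * gbinom q n (s + 1) := by
  obtain ⟨e, rfl⟩ : ∃ e, n = s + 1 + e := ⟨n - (s + 1), by omega⟩
  rw [gbinom_eq_qFactorial hq (by omega), gbinom_eq_qFactorial hq (by omega),
    gbinom_eq_qFactorial hq (by omega), show s + 1 + e - s = e + 1 by omega,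
    show s + 1 + e + 1 - (s + 1) = e + 1 by omega, show s + 1 + e - (s + 1) = e by omega,
    qFactorial_succ q (s + 1 + e), qFactorial_succ q s, qFactorial_succ q e]
  have := qFactorial_ne_zero hq
  have := pow_sub_one_ne_zero_of_one_lt hq (j := s + 1) (by omega)
  have := pow_sub_one_ne_zero_of_one_lt hq (j := e + 1) (by omega)
  field_simp
  ring

lemma gbinom_mul_gbinom (hq : 1 < q) {i t m : ℕ} (hit : i ≤ t) (htm : t ≤ m) :
    gbinom q m t * gbinom q t i = gbinom q m i * gbinom q (m - i) (m - t) := by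
  rw [gbinom_eq_qFactorial hq htm, gbinom_eq_qFactorial hq hit,
    gbinom_eq_qFactorial hq (hit.trans htm), gbinom_eq_qFactorial hq (by omega),
    show m - i - (m - t) = t - i by omega]
  field_simp [qFactorial_ne_zero hq]

/-- The `q`-binomial theorem `∏_{j<n} (1 + q^j x) = ∑_s q^{s(s-1)/2} [n choose s]_q x^s` at
`x = -1`, where the factor `j = 0` vanishes. -/
theorem sum_range_neg_one_pow_mul_gbinom (hq : 1 < q) {n : ℕ} (hn : n ≠ 0) :
    ∑ s ∈ range (n + 1), (-1) ^ s * q ^ s.choose 2 * gbinom q n s = 0 := by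
  obtain ⟨n, rfl⟩ := Nat.exists_eq_succ_of_ne_zero hn
  set c : ℕ → ℝ := fun s => (-1) ^ s * q ^ s.choose 2
  have hc : ∀ s, c (s + 1) = -(q ^ s * c s) := fun s => by
    simp only [c, Nat.choose_succ_succ', Nat.choose_one_right, pow_succ, pow_add]
    ring
  -- Pascal's rule makes the inner terms telescope, the `s`-th one being `g s - g (s + 1)`.
  set g : ℕ → ℝ := fun s => c (s + 1) * gbinom q n s
  have htelescope : ∀ s ∈ range n, c (s + 1) * gbinom q (n + 1) (s + 1) = g s - g (s + 1) :=
    fun s hs => by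
      simp only [g, gbinom_succ_succ hq (mem_range.1 hs), hc (s + 1)]
      ring
  rw [sum_range_succ', sum_range_succ, sum_congr rfl htelescope, sum_range_sub']
  simp only [g, gbinom_self hq, gbinom_zero, mul_one]
  simp [c]

end QBinomial

theorem sum_powerset_Ioo_insert {M : Type*} [AddCommMonoid M] (f : Finset ℕ → M) {i m : ℕ}
    (him : i < m) :
    ∑ S ∈ (Ioo i m).powerset, f (insert m S) =
      ∑ t ∈ Ioc i m, ∑ S ∈ (Ioo t m).powerset, f (insert t (insert m S)) := by
  obtain ⟨k, rfl⟩ : ∃ k, m = i + 1 + k := ⟨m - (i + 1), by omega⟩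
  induction k generalizing i with
  | zero => simp [← Ico_add_one_left_eq_Ioo]
  | succ k ih =>
    rw [show i + 1 + (k + 1) = i + 1 + 1 + k by omega] at him ⊢
    rw [← Ico_add_one_left_eq_Ioo, ← Ioo_insert_left (by omega), sum_powerset_insert (by simp),
      ← insert_Ioc_add_one_left_eq_Ioc him, sum_insert (by simp), ih (by omega), add_comm]
    simp only [insert_comm]

lemma sum_Ioc_sub_eq_sum_range {M : Type*} [AddCommMonoid M] (h : ℕ → M) (i m : ℕ) :
    ∑ t ∈ Ioc i m, h (m - t) = ∑ r ∈ range (m - i), h r :=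
  sum_nbij' (m - ·) (m - ·) (by intro t; simp only [mem_Ioc, mem_range]; omega)
    (by intro r; simp only [mem_Ioc, mem_range]; omega) (by intro t; simp only [mem_Ioc]; omega)
    (by intro r; simp only [mem_range]; omega) (fun _ _ => rfl)

lemma chainProd_sort_insert (q : ℝ) {i a : ℕ} {T : Finset ℕ} (haT : a ∈ T)
    (ha : ∀ x ∈ T, a ≤ x) (hia : i < a) :
    chainProd q ((insert i T).sort (· ≤ ·)) = coeffC q a i * chainProd q (T.sort (· ≤ ·)) := by
  have hiT : ∀ x ∈ T, i < x := fun x hx => hia.trans_le (ha x hx)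
  have hsortT : T.sort (· ≤ ·) = a :: (T.erase a).sort (· ≤ ·) := by
    conv_lhs => rw [← insert_erase haT]
    exact sort_insert _ (fun x hx => ha x (mem_of_mem_erase hx)) (notMem_erase a T)
  rw [sort_insert _ (fun x hx => (hiT x hx).le) (fun h => (hiT i h).false), hsortT]
  rfl

/-- The sum of `chainProd` over the chains `i = ℓ_1 < ℓ_2 < ⋯ < ℓ_j = m`, a chain being encoded by
its set `S ⊆ (i, m)` of intermediate values. -/
noncomputable def chainSum (q : ℝ) (i m : ℕ) : ℝ :=
  ∑ S ∈ (Ioo i m).powerset, chainProd q ((insert i (insert m S)).sort (· ≤ ·))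

lemma chainSum_self (q : ℝ) (m : ℕ) : chainSum q m m = 1 := by
  simp [chainSum, chainProd]

lemma chainSum_eq_sum (q : ℝ) {i m : ℕ} (him : i < m) :
    chainSum q i m = ∑ t ∈ Ioc i m, coeffC q t i * chainSum q t m := by
  rw [chainSum, sum_powerset_Ioo_insert (fun T => chainProd q ((insert i T).sort (· ≤ ·))) him]
  simp only [chainSum, mul_sum]
  refine sum_congr rfl fun t ht => sum_congr rfl fun S hS => ?_
  obtain ⟨hit, htm⟩ := mem_Ioc.1 ht
  refine chainProd_sort_insert q (mem_insert_self _ _) (fun x hx => ?_) hit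
  rcases mem_insert.1 hx with rfl | hx
  · rfl
  rcases mem_insert.1 hx with rfl | hx
  · exact htm
  · exact (mem_Ioo.1 (mem_powerset.1 hS hx)).1.le

noncomputable def chainSumFormula (q : ℝ) (i m : ℕ) : ℝ :=
  (-1) ^ (m - i) * q ^ (m - i).choose 2 * gbinom q m i * ∏ k ∈ Icc (i + 1) m, (q ^ k + 1)

lemma chainSumFormula_self {q : ℝ} (hq : 1 < q) (m : ℕ) : chainSumFormula q m m = 1 := by
  simp [chainSumFormula, gbinom_self hq]

lemma sum_coeffC_mul_chainSumFormula {q : ℝ} (hq : 1 < q) {i m : ℕ} (him : i < m) :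
    ∑ t ∈ Ioc i m, coeffC q t i * chainSumFormula q t m = chainSumFormula q i m := by
  set P := ∏ k ∈ Icc (i + 1) m, (q ^ k + 1)
  have hterm : ∀ t ∈ Ioc i m, coeffC q t i * chainSumFormula q t m =
      -((-1) ^ (m - t) * q ^ (m - t).choose 2 * gbinom q (m - i) (m - t)) *
        (gbinom q m i * P) := fun t ht => by
    obtain ⟨hit, htm⟩ := mem_Ioc.1 ht
    have hP : (∏ k ∈ Icc (i + 1) t, (q ^ k + 1)) * ∏ k ∈ Icc (t + 1) m, (q ^ k + 1) = P := by
      simp only [P, Icc_add_one_left_eq_Ioc]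
      exact prod_Ioc_consecutive _ hit.le htm
    rw [coeffC, chainSumFormula, ← hP]
    linear_combination (-((-1) ^ (m - t) * q ^ (m - t).choose 2) *
      (∏ k ∈ Icc (i + 1) t, (q ^ k + 1)) * ∏ k ∈ Icc (t + 1) m, (q ^ k + 1)) *
      gbinom_mul_gbinom hq hit.le htm
  have halt := sum_range_neg_one_pow_mul_gbinom hq (n := m - i) (by omega)
  rw [sum_range_succ, gbinom_self hq] at halt
  rw [sum_congr rfl hterm, ← sum_mul,
    sum_Ioc_sub_eq_sum_range (fun r => -((-1) ^ r * q ^ r.choose 2 * gbinom q (m - i) r)),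
    sum_neg_distrib, chainSumFormula]
  linear_combination (-(gbinom q m i * P)) * halt

theorem chainSum_eq_chainSumFormula {q : ℝ} (hq : 1 < q) {i m : ℕ} (him : i ≤ m) :
    chainSum q i m = chainSumFormula q i m := by
  induction h : m - i using Nat.strong_induction_on generalizing i with
  | _ d ih =>
    rcases him.eq_or_lt with rfl | him
    · rw [chainSum_self, chainSumFormula_self hq]
    rw [chainSum_eq_sum q him, ← sum_coeffC_mul_chainSumFormula hq him]
    refine sum_congr rfl fun t ht => ?_
    obtain ⟨hit, htm⟩ := mem_Ioc.1 ht
    rw [ih (m - t) (by omega) htm rfl]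

/-- The chains `i = ℓ_1 < ℓ_2 < ⋯ < ℓ_j = m` correspond exactly to the subsets `S` of the
open interval `(i, m)` (the intermediate values), the associated sorted list being
`i` followed by the elements of `S` in increasing order, followed by `m`. -/
theorem stmt9 (q : ℝ) (hq : 1 < q) (i m : ℕ) (him : i ≤ m) :
    ∑ S ∈ (Finset.Ioo i m).powerset,
      chainProd q ((insert i (insert m S)).sort (· ≤ ·)) =
    (-1 : ℝ) ^ (m - i) * q ^ ((m - i) * (m - i - 1) / 2) * gbinom q m i *
      ∏ k ∈ Finset.Icc (i + 1) m, (q ^ k + 1) := by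
  rw [← Nat.choose_two_right]
  exact chainSum_eq_chainSumFormula hq him
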